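/- Fix a direction θ and suppose E satisfies the slice coding condition at θ and that ν_θ is absolutely continuous with essentially bounded density h_θ. Then there exists a constant C<∞ such that h_θ(x) ≤ C·diam(E_{θ,x})^{s−1} for ν_θ-a.e. x∈π_θ(E). -/

import Mathlib

/-! The density bound comes from self-similarity. On the set of `x` whose slice lies in a piece
`S_w(E)`, the measure `ν_θ` is dominated by `r_w^s` times the image of `ν_θ` under an affine map
of ratio `r_w`, so the density there is at most `r_w^{s-1}‖h_θ‖_∞`. The slice coding condition
lets one pass from `S_w(E)` to a piece `S_{wa}(E)` until the slice, rescaled by `r_w⁻¹`, has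
diameter more than `δ`; then `r_w < diam(E_{θ,x})/δ`. If this never happens, the bound holds
for arbitrarily long words `w`, which forces `h_θ(x) ≤ 0`. -/

open MeasureTheory Filter Topology Metric
open scoped ENNReal RealInnerProductSpace

noncomputable section

/-- Orthogonal projection onto the line through the origin in the direction of the
unit vector `θ`, identified with `ℝ`. -/
def projLine {n : ℕ} (θ : EuclideanSpace ℝ (Fin n)) (p : EuclideanSpace ℝ (Fin n)) : ℝ :=
  ⟪p, θ⟫

/-- The slice `E_{θ,x} = E ∩ π_θ⁻¹(x)`. -/
def sliceSet {n : ℕ} (E : Set (EuclideanSpace ℝ (Fin n)))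
    (θ : EuclideanSpace ℝ (Fin n)) (x : ℝ) : Set (EuclideanSpace ℝ (Fin n)) :=
  E ∩ projLine θ ⁻¹' {x}

/-- The projection `ν_θ = ν ∘ π_θ⁻¹` of `ν = H^s|_E` onto the line in direction `θ`. -/
def projMeasure {n : ℕ} (s : ℝ) (E : Set (EuclideanSpace ℝ (Fin n)))
    (θ : EuclideanSpace ℝ (Fin n)) : Measure ℝ :=
  Measure.map (projLine θ) (μH[s].restrict E)

/-- The slice coding condition at direction `θ`: there is `δ > 0` such that every slice
either has diameter greater than `δ` or is contained in a single first-level piece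
`S_a(E)` of the attractor. -/
def SliceCodingCond {n l : ℕ} (S : Fin l → EuclideanSpace ℝ (Fin n) → EuclideanSpace ℝ (Fin n))
    (E : Set (EuclideanSpace ℝ (Fin n))) (θ : EuclideanSpace ℝ (Fin n)) : Prop :=
  ∃ δ > (0 : ℝ), ∀ x ∈ projLine θ '' E,
    δ < Metric.diam (sliceSet E θ x) ∨ ∃ i : Fin l, sliceSet E θ x ⊆ S i '' E

/-- `E` is the attractor of the IFS `S₁,…,S_l`: a nonempty compact set with
`E = ⋃ᵢ Sᵢ(E)`. -/
def IsAttractor {n l : ℕ} (S : Fin l → EuclideanSpace ℝ (Fin n) → EuclideanSpace ℝ (Fin n))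
    (E : Set (EuclideanSpace ℝ (Fin n))) : Prop :=
  E.Nonempty ∧ IsCompact E ∧ E = ⋃ i : Fin l, S i '' E

/-- The open set condition for the IFS `S₁,…,S_l`. -/
def OpenSetCond {n l : ℕ}
    (S : Fin l → EuclideanSpace ℝ (Fin n) → EuclideanSpace ℝ (Fin n)) : Prop :=
  ∃ V : Set (EuclideanSpace ℝ (Fin n)), V.Nonempty ∧ IsOpen V ∧
    (∀ i : Fin l, S i '' V ⊆ V) ∧
    Pairwise fun i j : Fin l => Disjoint (S i '' V) (S j '' V)

section Density

variable {α : Type*} [MeasurableSpace α] {μ : Measure α} {g : α → ℝ≥0∞} {t : ℝ≥0∞}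

theorem withDensity_apply_le_mul_of_ae_le (hg : ∀ᵐ x ∂μ, g x ≤ t) {A : Set α}
    (hA : MeasurableSet A) : μ.withDensity g A ≤ t * μ A := by
  rw [withDensity_apply _ hA, ← setLIntegral_const]
  exact lintegral_mono_ae (ae_restrict_of_ae hg)

theorem ae_le_of_withDensity_inter_le [SigmaFinite μ] (hg : Measurable g) {B : Set α}
    (hB : MeasurableSet B) (hBt : ∀ A, MeasurableSet A → μ.withDensity g (B ∩ A) ≤ t * μ A) :
    ∀ᵐ x ∂μ, x ∈ B → g x ≤ t := by
  have key : B.indicator g ≤ᵐ[μ] fun _ => t := by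
    refine ae_le_of_forall_setLIntegral_le_of_sigmaFinite (hg.indicator hB) fun A hA _ => ?_
    rw [lintegral_indicator hB, Measure.restrict_restrict hB, setLIntegral_const,
      ← withDensity_apply _ (hB.inter hA)]
    exact hBt A hA
  filter_upwards [key] with x hx hxB
  simpa [Set.indicator_of_mem hxB] using hx

end Density

theorem volume_preimage_mul_add {ρ : ℝ} (hρ : 0 < ρ) (c : ℝ) (A : Set ℝ) :
    volume ((fun y => ρ * y + c) ⁻¹' A) = ENNReal.ofReal ρ⁻¹ * volume A := by
  rw [show (fun y => ρ * y + c) = (· + c) ∘ (ρ * ·) from rfl, Set.preimage_comp,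
    Real.volume_preimage_mul_left hρ.ne', measure_preimage_add_right, abs_of_pos (inv_pos.2 hρ)]

theorem nonpos_of_forall_le_mul_pow_rpow {y c q t : ℝ} (hq0 : 0 ≤ q) (hq1 : q < 1) (ht : 0 < t)
    (hy : ∀ k : ℕ, y ≤ c * (q ^ k) ^ t) : y ≤ 0 := by
  have hlim : Tendsto (fun k : ℕ => c * (q ^ t) ^ k) atTop (𝓝 0) := by
    simpa using (tendsto_pow_atTop_nhds_zero_of_lt_one (Real.rpow_nonneg hq0 t)
      (Real.rpow_lt_one hq0 hq1 ht)).const_mul c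
  exact ge_of_tendsto' hlim fun k => by rw [Real.rpow_pow_comm hq0]; exact hy k

theorem le_div_rpow_mul_rpow_of_mul_lt {y c δ ρ D t : ℝ} (hc : 0 ≤ c) (hδ : 0 < δ) (hρ : 0 < ρ)
    (ht : 0 ≤ t) (hy : y ≤ c * ρ ^ t) (hD : δ * ρ < D) : y ≤ c / δ ^ t * D ^ t := by
  have hδt : 0 < δ ^ t := Real.rpow_pos_of_pos hδ t
  calc y ≤ c * ρ ^ t := hy
    _ = c / δ ^ t * (δ * ρ) ^ t := by rw [Real.mul_rpow hδ.le hρ.le]; field_simp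
    _ ≤ c / δ ^ t * D ^ t := by gcongr

section Words

variable {ι X : Type*} (S : ι → X → X)

def wordMap (w : List ι) : X → X :=
  w.foldr (fun i f => S i ∘ f) id

@[simp]
theorem wordMap_nil : wordMap S [] = id := rfl

@[simp]
theorem wordMap_cons (i : ι) (w : List ι) : wordMap S (i :: w) = S i ∘ wordMap S w := rfl

theorem wordMap_append_singleton (w : List ι) (i : ι) :
    wordMap S (w ++ [i]) = wordMap S w ∘ S i := by
  induction w with
  | nil => rfl
  | cons j w ih => rw [List.cons_append, wordMap_cons, wordMap_cons, ih]; rfl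

theorem image_wordMap_subset {E : Set X} (hSE : ∀ i, S i '' E ⊆ E) (w : List ι) :
    wordMap S w '' E ⊆ E := by
  induction w with
  | nil => simp
  | cons i w ih =>
    rw [wordMap_cons, Set.image_comp]
    exact (Set.image_mono ih).trans (hSE i)

theorem wordMap_apply_eq_smul_add {R : Type*} [Semiring R] [AddCommMonoid X] [Module R X]
    {r : ι → R} {d : ι → X} (hS : ∀ i x, S i x = r i • x + d i) (w : List ι) (p : X) :
    wordMap S w p = (w.map r).prod • p + wordMap S w 0 := by
  induction w generalizing p with
  | nil => simp
  | cons i w ih =>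
    rw [wordMap_cons, Function.comp_apply, Function.comp_apply, hS, hS, ih p, List.map_cons,
      List.prod_cons, smul_add, mul_smul, add_assoc]

end Words

theorem prod_map_pos {ι : Type*} {r : ι → ℝ} (hr : ∀ i, 0 < r i) (w : List ι) :
    0 < (w.map r).prod :=
  List.prod_pos (by simpa using fun i _ => hr i)

theorem prod_map_le_pow_length {ι : Type*} {r : ι → ℝ} {q : ℝ} (hr : ∀ i, 0 ≤ r i)
    (hrq : ∀ i, r i ≤ q) (w : List ι) : (w.map r).prod ≤ q ^ w.length := by
  simpa using List.prod_map_le_prod_map₀ r (fun _ => q) (fun i _ => hr i) (fun i _ => hrq i)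

theorem exists_nonneg_lt_one_forall_le {ι : Type*} [Finite ι] {r : ι → ℝ}
    (hr : ∀ i, r i ∈ Set.Ioo 0 1) : ∃ q, 0 ≤ q ∧ q < 1 ∧ ∀ i, r i ≤ q := by
  cases isEmpty_or_nonempty ι
  · exact ⟨0, le_rfl, zero_lt_one, isEmptyElim⟩
  · obtain ⟨i, hi⟩ := Finite.exists_max r
    exact ⟨r i, (hr i).1.le, (hr i).2, hi⟩

section Slices

variable {n : ℕ} (θ : EuclideanSpace ℝ (Fin n))

def codingSet (E K : Set (EuclideanSpace ℝ (Fin n))) : Set ℝ :=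
  {x ∈ projLine θ '' E | sliceSet E θ x ⊆ K}

theorem continuous_projLine : Continuous (projLine θ) :=
  continuous_id.inner continuous_const

theorem projLine_smul_add (ρ : ℝ) (p v : EuclideanSpace ℝ (Fin n)) :
    projLine θ (ρ • p + v) = ρ * projLine θ p + projLine θ v := by
  rw [projLine, projLine, projLine, inner_add_left, real_inner_smul_left]

theorem measurableSet_codingSet {E K : Set (EuclideanSpace ℝ (Fin n))} (hE : IsCompact E)
    (hK : IsClosed K) : MeasurableSet (codingSet θ E K) := by
  have hdiff : codingSet θ E K = projLine θ '' E \ projLine θ '' (E \ K) := by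
    ext x
    simp only [codingSet, sliceSet, Set.subset_def]
    grind
  obtain ⟨F, hF, -, hFK, -⟩ := hK.isOpen_compl.exists_iUnion_isClosed
  rw [hdiff, Set.sdiff_eq E, ← hFK, Set.inter_iUnion, Set.image_iUnion]
  exact (hE.image (continuous_projLine θ)).measurableSet.diff <| .iUnion fun m =>
    ((hE.inter_right (hF m)).image (continuous_projLine θ)).measurableSet

variable {E : Set (EuclideanSpace ℝ (Fin n))}
  {T : EuclideanSpace ℝ (Fin n) → EuclideanSpace ℝ (Fin n)} {ρ : ℝ} {v : EuclideanSpace ℝ (Fin n)}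

theorem sliceSet_eq_image_of_mem_codingSet (hT : ∀ p, T p = ρ • p + v) (hρ : ρ ≠ 0)
    (hTE : T '' E ⊆ E) {x : ℝ} (hx : x ∈ codingSet θ E (T '' E)) :
    sliceSet E θ x = T '' sliceSet E θ ((x - projLine θ v) / ρ) := by
  ext p
  constructor
  · intro hp
    obtain ⟨q, hq, rfl⟩ := hx.2 hp
    refine ⟨q, ⟨hq, ?_⟩, rfl⟩
    have hpx : projLine θ (T q) = x := hp.2
    rw [hT, projLine_smul_add] at hpx
    rw [Set.mem_preimage, Set.mem_singleton_iff, eq_div_iff hρ]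
    linarith
  · rintro ⟨q, ⟨hq, hqx⟩, rfl⟩
    refine ⟨hTE ⟨q, hq, rfl⟩, ?_⟩
    rw [Set.mem_preimage, Set.mem_singleton_iff] at hqx ⊢
    rw [hT, projLine_smul_add, hqx]
    field_simp
    ring

open scoped Pointwise in
theorem diam_image_smul_add (hT : ∀ p, T p = ρ • p + v) (hρ : 0 ≤ ρ)
    (A : Set (EuclideanSpace ℝ (Fin n))) : diam (T '' A) = ρ * diam A := by
  have : T '' A = (· + v) '' (ρ • A) := by
    rw [← Set.image_smul, Set.image_image]; simp only [hT]
  rw [this, (isometry_add_right v).diam_image, diam_smul₀, Real.norm_of_nonneg hρ]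

theorem lipschitzWith_of_eq_smul_add (hT : ∀ p, T p = ρ • p + v) (hρ : 0 ≤ ρ) :
    LipschitzWith ρ.toNNReal T :=
  LipschitzWith.of_dist_le_mul fun a b => by
    rw [hT, hT, dist_add_right, dist_smul₀, Real.norm_of_nonneg hρ, Real.coe_toNNReal _ hρ]

end Slices

section Projection

variable {n : ℕ} {s : ℝ} {E : Set (EuclideanSpace ℝ (Fin n))} {θ : EuclideanSpace ℝ (Fin n)}
  {T : EuclideanSpace ℝ (Fin n) → EuclideanSpace ℝ (Fin n)} {ρ : ℝ} {v : EuclideanSpace ℝ (Fin n)}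

theorem projMeasure_apply {M : Set ℝ} (hM : MeasurableSet M) :
    projMeasure s E θ M = μH[s] (E ∩ projLine θ ⁻¹' M) := by
  rw [projMeasure, Measure.map_apply (continuous_projLine θ).measurable hM,
    Measure.restrict_apply ((continuous_projLine θ).measurable hM), Set.inter_comm]

theorem projMeasure_codingSet_inter_le (hs : 0 ≤ s) (hT : ∀ p, T p = ρ • p + v) (hρ : 0 ≤ ρ)
    (hB : MeasurableSet (codingSet θ E (T '' E))) {A : Set ℝ} (hA : MeasurableSet A) :
    projMeasure s E θ (codingSet θ E (T '' E) ∩ A) ≤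
      ENNReal.ofReal ρ ^ s * projMeasure s E θ ((fun y => ρ * y + projLine θ v) ⁻¹' A) := by
  have hsub : E ∩ projLine θ ⁻¹' (codingSet θ E (T '' E) ∩ A) ⊆
      T '' (E ∩ projLine θ ⁻¹' ((fun y => ρ * y + projLine θ v) ⁻¹' A)) := by
    rintro p ⟨hpE, hpB, hpA⟩
    obtain ⟨q, hq, rfl⟩ := hpB.2 ⟨hpE, rfl⟩
    refine ⟨q, ⟨hq, ?_⟩, rfl⟩
    rwa [hT, projLine_smul_add] at hpA
  rw [projMeasure_apply (hB.inter hA), projMeasure_apply (by measurability)]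
  exact (measure_mono hsub).trans
    ((lipschitzWith_of_eq_smul_add hT hρ).hausdorffMeasure_image_le hs _)

theorem ae_le_mul_rpow_of_mem_codingSet {h : ℝ → ℝ} (hmeas : Measurable h)
    (hdens : projMeasure s E θ = volume.withDensity fun x => ENNReal.ofReal (h x)) {c : ℝ}
    (hc0 : 0 ≤ c) (hc : ∀ᵐ x, h x ≤ c) (hE : IsCompact E) (hs : 0 ≤ s)
    (hT : ∀ p, T p = ρ • p + v) (hρ : 0 < ρ) :
    ∀ᵐ x, x ∈ codingSet θ E (T '' E) → h x ≤ c * ρ ^ (s - 1) := by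
  have hB : MeasurableSet (codingSet θ E (T '' E)) := measurableSet_codingSet θ hE
    (hE.image (lipschitzWith_of_eq_smul_add hT hρ.le).continuous).isClosed
  have hbound := ae_le_of_withDensity_inter_le (t := ENNReal.ofReal (c * ρ ^ (s - 1)))
    hmeas.ennreal_ofReal hB fun A hA => by
      have hA' : MeasurableSet ((fun y => ρ * y + projLine θ v) ⁻¹' A) := by measurability
      rw [← hdens]
      calc projMeasure s E θ (codingSet θ E (T '' E) ∩ A)
          ≤ ENNReal.ofReal ρ ^ s * projMeasure s E θ ((fun y => ρ * y + projLine θ v) ⁻¹' A) :=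
            projMeasure_codingSet_inter_le hs hT hρ.le hB hA
        _ ≤ ENNReal.ofReal ρ ^ s *
              (ENNReal.ofReal c * volume ((fun y => ρ * y + projLine θ v) ⁻¹' A)) := by
            rw [hdens]
            gcongr
            exact withDensity_apply_le_mul_of_ae_le
              (hc.mono fun x hx => ENNReal.ofReal_le_ofReal hx) hA'
        _ = ENNReal.ofReal (c * ρ ^ (s - 1)) * volume A := by
            rw [volume_preimage_mul_add hρ, ENNReal.ofReal_rpow_of_pos hρ, ← mul_assoc,
              ← mul_assoc, ← ENNReal.ofReal_mul (by positivity),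
              ← ENNReal.ofReal_mul (by positivity), Real.rpow_sub hρ, Real.rpow_one]
            congr 2
            field_simp
  filter_upwards [hbound] with x hx hxB
  exact (ENNReal.ofReal_le_ofReal_iff (by positivity)).1 (hx hxB)

end Projection

section Coding

variable {n l : ℕ} {r : Fin l → ℝ} {d : Fin l → EuclideanSpace ℝ (Fin n)}
  {S : Fin l → EuclideanSpace ℝ (Fin n) → EuclideanSpace ℝ (Fin n)}
  {E : Set (EuclideanSpace ℝ (Fin n))} {θ : EuclideanSpace ℝ (Fin n)}

theorem ae_forall_word_le_mul_rpow {s c : ℝ} {h : ℝ → ℝ} (hS : ∀ i x, S i x = r i • x + d i)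
    (hr : ∀ i, 0 < r i) (hE : IsCompact E) (hs : 0 ≤ s) (hmeas : Measurable h)
    (hdens : projMeasure s E θ = volume.withDensity fun x => ENNReal.ofReal (h x))
    (hc0 : 0 ≤ c) (hc : ∀ᵐ x, h x ≤ c) :
    ∀ᵐ x ∂projMeasure s E θ, ∀ w, x ∈ codingSet θ E (wordMap S w '' E) →
      h x ≤ c * (w.map r).prod ^ (s - 1) := by
  rw [hdens]
  refine (withDensity_absolutelyContinuous _ _).ae_le (ae_all_iff.2 fun w => ?_)
  exact ae_le_mul_rpow_of_mem_codingSet hmeas hdens hc0 hc hE hs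
    (wordMap_apply_eq_smul_add S hS w) (prod_map_pos hr w)

theorem exists_word_of_sliceCoding {δ : ℝ} (hS : ∀ i x, S i x = r i • x + d i)
    (hr : ∀ i, 0 < r i) (hSE : ∀ i, S i '' E ⊆ E)
    (hcode : ∀ x ∈ projLine θ '' E,
      δ < diam (sliceSet E θ x) ∨ ∃ i, sliceSet E θ x ⊆ S i '' E)
    (k : ℕ) {x : ℝ} (hx : x ∈ projLine θ '' E) :
    (∃ w, x ∈ codingSet θ E (wordMap S w '' E) ∧ δ * (w.map r).prod < diam (sliceSet E θ x)) ∨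
      ∃ w : List (Fin l), w.length = k ∧ x ∈ codingSet θ E (wordMap S w '' E) := by
  induction k with
  | zero =>
    refine .inr ⟨[], rfl, hx, ?_⟩
    rw [wordMap_nil, Set.image_id]
    exact Set.inter_subset_left
  | succ k ih =>
    obtain hstop | ⟨w, hw, hxw⟩ := ih
    · exact .inl hstop
    have hT := wordMap_apply_eq_smul_add S hS w
    have hρ := prod_map_pos hr w
    have hslice := sliceSet_eq_image_of_mem_codingSet θ hT hρ.ne'
      (image_wordMap_subset S hSE w) hxw
    set x' := (x - projLine θ (wordMap S w 0)) / (w.map r).prod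
    have hx' : x' ∈ projLine θ '' E := by
      obtain ⟨p, hp, hpx⟩ := hx
      have hp' : p ∈ sliceSet E θ x := ⟨hp, hpx⟩
      rw [hslice] at hp'
      obtain ⟨q, ⟨hq, hqx⟩, -⟩ := hp'
      exact ⟨q, hq, hqx⟩
    rcases hcode x' hx' with hbig | ⟨i, hi⟩
    · refine .inl ⟨w, hxw, ?_⟩
      rw [hslice, diam_image_smul_add hT hρ.le, mul_comm δ]
      exact mul_lt_mul_of_pos_left hbig hρ
    · refine .inr ⟨w ++ [i], by simp [hw], hx, ?_⟩
      rw [hslice, wordMap_append_singleton, Set.image_comp]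
      exact Set.image_mono hi

end Coding

theorem stmt14_general {n l : ℕ} (r : Fin l → ℝ) (hr : ∀ i, r i ∈ Set.Ioo (0 : ℝ) 1)
    (d : Fin l → EuclideanSpace ℝ (Fin n))
    (S : Fin l → EuclideanSpace ℝ (Fin n) → EuclideanSpace ℝ (Fin n))
    (hS : ∀ i x, S i x = r i • x + d i)
    (E : Set (EuclideanSpace ℝ (Fin n))) (hE : IsAttractor S E)
    (s : ℝ) (hs : 1 < s)
    (θ : EuclideanSpace ℝ (Fin n))
    (hscc : SliceCodingCond S E θ)
    (h : ℝ → ℝ) (hmeas : Measurable h)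
    (hdens : projMeasure s E θ = volume.withDensity fun x => ENNReal.ofReal (h x))
    (hbdd : ∃ c : ℝ, ∀ᵐ x ∂(volume : Measure ℝ), h x ≤ c) :
    ∃ C : ℝ, ∀ᵐ x ∂projMeasure s E θ, x ∈ projLine θ '' E →
      h x ≤ C * Metric.diam (sliceSet E θ x) ^ (s - 1) := by
  obtain ⟨-, hcomp, hunion⟩ := hE
  obtain ⟨δ, hδ, hcode⟩ := hscc
  obtain ⟨c, hc⟩ := hbdd
  obtain ⟨q, hq0, hq1, hrq⟩ := exists_nonneg_lt_one_forall_le hr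
  have hSE : ∀ i, S i '' E ⊆ E := fun i =>
    (Set.subset_iUnion (fun j => S j '' E) i).trans hunion.superset
  have hr0 : ∀ i, 0 < r i := fun i => (hr i).1
  have hρ := prod_map_pos hr0
  have hword := ae_forall_word_le_mul_rpow hS hr0 hcomp (by linarith) hmeas hdens
    (le_max_right c 0) (hc.mono fun x hx => hx.trans (le_max_left c 0))
  refine ⟨max c 0 / δ ^ (s - 1), ?_⟩
  filter_upwards [hword] with x hx hxE
  by_cases hstop : ∃ w, x ∈ codingSet θ E (wordMap S w '' E) ∧
      δ * (w.map r).prod < diam (sliceSet E θ x)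
  · obtain ⟨w, hxw, hlt⟩ := hstop
    exact le_div_rpow_mul_rpow_of_mul_lt (le_max_right c 0) hδ (hρ w) (by linarith) (hx w hxw) hlt
  · refine (nonpos_of_forall_le_mul_pow_rpow (c := max c 0) hq0 hq1 (sub_pos.2 hs)
      fun k => ?_).trans (by positivity)
    obtain ⟨w, rfl, hxw⟩ :=
      (exists_word_of_sliceCoding hS hr0 hSE hcode k hxE).resolve_left hstop
    refine (hx w hxw).trans ?_
    gcongr
    exacts [(hρ w).le, prod_map_le_pow_length (fun i => (hr0 i).le) hrq w]

/-- If `E` satisfies the slice coding condition at `θ` and `ν_θ` is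
absolutely continuous with essentially bounded density `h_θ`, then there is a constant
`C < ∞` with `h_θ(x) ≤ C·diam(E_{θ,x})^{s-1}` for `ν_θ`-a.e. `x ∈ π_θ(E)`. -/
theorem stmt14 {n l : ℕ} (r : Fin l → ℝ) (hr : ∀ i, r i ∈ Set.Ioo (0 : ℝ) 1)
    (d : Fin l → EuclideanSpace ℝ (Fin n))
    (S : Fin l → EuclideanSpace ℝ (Fin n) → EuclideanSpace ℝ (Fin n))
    (hS : ∀ i x, S i x = r i • x + d i)
    (E : Set (EuclideanSpace ℝ (Fin n))) (hE : IsAttractor S E) (hOSC : OpenSetCond S)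
    (s : ℝ) (hs : 1 < s) (hdim : ∑ i : Fin l, r i ^ s = 1)
    (hpos : 0 < μH[s] E) (hfin : μH[s] E < ⊤)
    (θ : EuclideanSpace ℝ (Fin n)) (hθ : ‖θ‖ = 1)
    (hscc : SliceCodingCond S E θ)
    (h : ℝ → ℝ) (hmeas : Measurable h) (hnonneg : ∀ x, 0 ≤ h x)
    (hdens : projMeasure s E θ = volume.withDensity fun x => ENNReal.ofReal (h x))
    (hbdd : ∃ c : ℝ, ∀ᵐ x ∂(volume : Measure ℝ), h x ≤ c) :
    ∃ C : ℝ, ∀ᵐ x ∂projMeasure s E θ, x ∈ projLine θ '' E →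
      h x ≤ C * Metric.diam (sliceSet E θ x) ^ (s - 1) :=
  stmt14_general r hr d S hS E hE s hs θ hscc h hmeas hdens hbdd
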